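/- Let M be an m×m real matrix, N an n×n real matrix, and p ≥ 1. Then the p↦p operator norm is multiplicative under the Kronecker (tensor) product: ‖M ⊗ N‖_{p→p} = ‖M‖_{p→p} · ‖N‖_{p→p}. -/

import Mathlib

open Kronecker

/-- The `ℓ_p` norm of a vector for a real exponent `p`. -/
noncomputable def pnorm {ι : Type*} [Fintype ι] (p : ℝ) (x : ι → ℝ) : ℝ :=
  (∑ i, |x i| ^ p) ^ (1 / p)

/-- The `q ↦ p` operator norm of a matrix `A`. -/
noncomputable def opNorm {ι κ : Type*} [Fintype ι] [Fintype κ] (q p : ℝ)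
    (A : Matrix ι κ ℝ) : ℝ :=
  sSup {r : ℝ | ∃ x : κ → ℝ, x ≠ 0 ∧ r = pnorm p (A.mulVec x) / pnorm q x}

/-!
Write `A ⊗ₖ B = (A ⊗ₖ 1) * (1 ⊗ₖ B)`. Each factor acts slice by slice on a vector indexed by a
product, and the `p`-th power of the `p`-norm is additive over slices, so the factors have
norms at most `‖A‖` and `‖B‖`. Conversely, `A ⊗ₖ B` maps the outer product `x ⊗ y` to
`(A x) ⊗ (B y)`, and the `p`-norm is multiplicative on outer products, so the product of a
ratio `‖A x‖ / ‖x‖` with a ratio `‖B y‖ / ‖y‖` is a ratio for `A ⊗ₖ B`.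
-/

open Finset Matrix

variable {ι ι' κ κ' : Type*} {p : ℝ}

lemma Real.sSup_mul_sSup_le {S T : Set ℝ} {K : ℝ} (hS : ∀ a ∈ S, 0 ≤ a) (hT : ∀ b ∈ T, 0 ≤ b)
    (hK : 0 ≤ K) (h : ∀ a ∈ S, ∀ b ∈ T, a * b ≤ K) : sSup S * sSup T ≤ K := by
  rw [← smul_eq_mul, ← Real.sSup_smul_of_nonneg (Real.sSup_nonneg hS)]
  refine Real.sSup_le ?_ hK
  rintro _ ⟨b, hb, rfl⟩
  show sSup S * b ≤ K
  rw [mul_comm, ← smul_eq_mul, ← Real.sSup_smul_of_nonneg (hT b hb)]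
  refine Real.sSup_le ?_ hK
  rintro _ ⟨a, ha, rfl⟩
  show b * a ≤ K
  exact mul_comm b a ▸ h a ha b hb

section Norms

variable [Fintype ι] [Fintype κ]

lemma pnorm_nonneg (p : ℝ) (x : ι → ℝ) : 0 ≤ pnorm p x :=
  Real.rpow_nonneg (sum_nonneg fun _ _ => Real.rpow_nonneg (abs_nonneg _) _) _

lemma pnorm_rpow (hp : p ≠ 0) (x : ι → ℝ) : pnorm p x ^ p = ∑ i, |x i| ^ p := by
  rw [pnorm, ← Real.rpow_mul (sum_nonneg fun _ _ => Real.rpow_nonneg (abs_nonneg _) _),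
    one_div_mul_cancel hp, Real.rpow_one]

lemma pnorm_zero (hp : p ≠ 0) : pnorm p (0 : ι → ℝ) = 0 := by
  simp [pnorm, Real.zero_rpow hp, Real.zero_rpow (inv_ne_zero hp)]

lemma abs_le_pnorm (hp : 0 < p) (x : ι → ℝ) (j : ι) : |x j| ≤ pnorm p x := by
  have hj : |x j| ^ p ≤ ∑ i, |x i| ^ p :=
    single_le_sum (fun i _ => Real.rpow_nonneg (abs_nonneg (x i)) p) (mem_univ j)
  rwa [← pnorm_rpow hp.ne', Real.rpow_le_rpow_iff (abs_nonneg _) (pnorm_nonneg p x) hp] at hj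

lemma pnorm_pos (hp : 0 < p) {x : ι → ℝ} (hx : x ≠ 0) : 0 < pnorm p x := by
  obtain ⟨j, hj⟩ := Function.ne_iff.mp hx
  exact (abs_pos.mpr hj).trans_le (abs_le_pnorm hp x j)

lemma pnorm_le_mul_pnorm_iff (hp : 0 < p) {C : ℝ} (hC : 0 ≤ C) (y : ι → ℝ) (x : κ → ℝ) :
    pnorm p y ≤ C * pnorm p x ↔ ∑ i, |y i| ^ p ≤ C ^ p * ∑ j, |x j| ^ p := by
  rw [← Real.rpow_le_rpow_iff (pnorm_nonneg p y) (mul_nonneg hC (pnorm_nonneg p x)) hp,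
    Real.mul_rpow hC (pnorm_nonneg p x), pnorm_rpow hp.ne', pnorm_rpow hp.ne']

lemma pnorm_outer (x : ι → ℝ) (y : κ → ℝ) :
    pnorm p (fun ik : ι × κ => x ik.1 * y ik.2) = pnorm p x * pnorm p y := by
  have hsum : ∑ ik : ι × κ, |x ik.1 * y ik.2| ^ p = (∑ i, |x i| ^ p) * ∑ k, |y k| ^ p := by
    simp only [Fintype.sum_prod_type, sum_mul_sum, abs_mul,
      Real.mul_rpow (abs_nonneg _) (abs_nonneg _)]
  rw [pnorm, hsum, Real.mul_rpow (sum_nonneg fun _ _ => Real.rpow_nonneg (abs_nonneg _) _)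
    (sum_nonneg fun _ _ => Real.rpow_nonneg (abs_nonneg _) _)]
  rfl

lemma abs_dotProduct_le (hp : 0 < p) (a x : ι → ℝ) : |a ⬝ᵥ x| ≤ (∑ j, |a j|) * pnorm p x :=
  calc |a ⬝ᵥ x| ≤ ∑ j, |a j| * |x j| := by
        simpa only [dotProduct, abs_mul] using abs_sum_le_sum_abs (fun j => a j * x j) univ
    _ ≤ (∑ j, |a j|) * pnorm p x := by
        rw [sum_mul]
        exact sum_le_sum fun j _ => mul_le_mul_of_nonneg_left (abs_le_pnorm hp x j) (abs_nonneg _)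

lemma pnorm_mulVec_le_pnorm_rowSum (hp : 0 < p) (A : Matrix ι κ ℝ) (x : κ → ℝ) :
    pnorm p (A *ᵥ x) ≤ pnorm p (fun i => ∑ j, |A i j|) * pnorm p x := by
  rw [pnorm_le_mul_pnorm_iff hp (pnorm_nonneg _ _), pnorm_rpow hp.ne', sum_mul]
  apply sum_le_sum
  intro i _
  rw [← pnorm_rpow hp.ne' x, abs_of_nonneg (sum_nonneg fun j _ => abs_nonneg (A i j)),
    ← Real.mul_rpow (sum_nonneg fun j _ => abs_nonneg (A i j)) (pnorm_nonneg p x)]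
  exact Real.rpow_le_rpow (abs_nonneg _) (abs_dotProduct_le hp (A i) x) hp.le

lemma bddAbove_opNorm_set (hp : 0 < p) (A : Matrix ι κ ℝ) :
    BddAbove {r : ℝ | ∃ x : κ → ℝ, x ≠ 0 ∧ r = pnorm p (A *ᵥ x) / pnorm p x} := by
  refine ⟨pnorm p (fun i => ∑ j, |A i j|), ?_⟩
  rintro r ⟨x, hx, rfl⟩
  rw [div_le_iff₀ (pnorm_pos hp hx)]
  exact pnorm_mulVec_le_pnorm_rowSum hp A x

lemma opNorm_set_nonneg (q p : ℝ) (A : Matrix ι κ ℝ) :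
    ∀ r ∈ {r : ℝ | ∃ x : κ → ℝ, x ≠ 0 ∧ r = pnorm p (A *ᵥ x) / pnorm q x}, 0 ≤ r := by
  rintro r ⟨x, -, rfl⟩
  exact div_nonneg (pnorm_nonneg p _) (pnorm_nonneg q x)

lemma opNorm_nonneg (q p : ℝ) (A : Matrix ι κ ℝ) : 0 ≤ opNorm q p A :=
  Real.sSup_nonneg (opNorm_set_nonneg q p A)

lemma div_pnorm_le_opNorm (hp : 0 < p) (A : Matrix ι κ ℝ) {x : κ → ℝ} (hx : x ≠ 0) :
    pnorm p (A *ᵥ x) / pnorm p x ≤ opNorm p p A :=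
  le_csSup (bddAbove_opNorm_set hp A) ⟨x, hx, rfl⟩

lemma pnorm_mulVec_le_opNorm (hp : 0 < p) (A : Matrix ι κ ℝ) (x : κ → ℝ) :
    pnorm p (A *ᵥ x) ≤ opNorm p p A * pnorm p x := by
  obtain rfl | hx := eq_or_ne x 0
  · rw [mulVec_zero, pnorm_zero hp.ne', pnorm_zero hp.ne', mul_zero]
  · rw [← div_le_iff₀ (pnorm_pos hp hx)]
    exact div_pnorm_le_opNorm hp A hx

lemma opNorm_le_of_forall_pnorm_le (hp : 0 < p) {A : Matrix ι κ ℝ} {C : ℝ} (hC : 0 ≤ C)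
    (h : ∀ x, pnorm p (A *ᵥ x) ≤ C * pnorm p x) : opNorm p p A ≤ C := by
  refine Real.sSup_le ?_ hC
  rintro r ⟨x, hx, rfl⟩
  rw [div_le_iff₀ (pnorm_pos hp hx)]
  exact h x

end Norms

lemma kronecker_one_mulVec_apply [Fintype ι'] [Fintype κ] [DecidableEq κ] (A : Matrix ι ι' ℝ)
    (z : ι' × κ → ℝ) (i : ι) (k : κ) :
    ((A ⊗ₖ (1 : Matrix κ κ ℝ)) *ᵥ z) (i, k) = (A *ᵥ fun j => z (j, k)) i := by
  simp [mulVec, dotProduct, Fintype.sum_prod_type, one_apply]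

lemma one_kronecker_mulVec_apply [Fintype ι] [Fintype κ'] [DecidableEq ι] (B : Matrix κ κ' ℝ)
    (z : ι × κ' → ℝ) (i : ι) (k : κ) :
    (((1 : Matrix ι ι ℝ) ⊗ₖ B) *ᵥ z) (i, k) = (B *ᵥ fun l => z (i, l)) k := by
  simp [mulVec, dotProduct, Fintype.sum_prod_type, one_apply]

lemma outer_ne_zero {x : ι → ℝ} {y : κ → ℝ} (hx : x ≠ 0) (hy : y ≠ 0) :
    (fun ik : ι × κ => x ik.1 * y ik.2) ≠ 0 := by
  obtain ⟨i, hi⟩ := Function.ne_iff.mp hx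
  obtain ⟨k, hk⟩ := Function.ne_iff.mp hy
  exact Function.ne_iff.mpr ⟨(i, k), mul_ne_zero hi hk⟩

lemma kronecker_mulVec_outer [Fintype ι'] [Fintype κ'] (A : Matrix ι ι' ℝ) (B : Matrix κ κ' ℝ)
    (x : ι' → ℝ) (y : κ' → ℝ) :
    (A ⊗ₖ B) *ᵥ (fun jl => x jl.1 * y jl.2) = fun ik => (A *ᵥ x) ik.1 * (B *ᵥ y) ik.2 := by
  ext ⟨i, k⟩
  simp only [mulVec, dotProduct, Fintype.sum_prod_type, kroneckerMap_apply, sum_mul_sum]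
  exact sum_congr rfl fun j _ => sum_congr rfl fun l _ => by ring

section Kronecker

variable [Fintype ι] [Fintype ι'] [Fintype κ] [Fintype κ']

lemma pnorm_kronecker_one_mulVec_le [DecidableEq κ] (hp : 0 < p) (A : Matrix ι ι' ℝ)
    (z : ι' × κ → ℝ) :
    pnorm p ((A ⊗ₖ (1 : Matrix κ κ ℝ)) *ᵥ z) ≤ opNorm p p A * pnorm p z := by
  rw [pnorm_le_mul_pnorm_iff hp (opNorm_nonneg p p A), Fintype.sum_prod_type_right,
    Fintype.sum_prod_type_right, mul_sum]
  refine sum_le_sum fun k _ => ?_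
  simp only [kronecker_one_mulVec_apply]
  exact (pnorm_le_mul_pnorm_iff hp (opNorm_nonneg p p A) _ _).mp (pnorm_mulVec_le_opNorm hp A _)

lemma pnorm_one_kronecker_mulVec_le [DecidableEq ι] (hp : 0 < p) (B : Matrix κ κ' ℝ)
    (z : ι × κ' → ℝ) :
    pnorm p (((1 : Matrix ι ι ℝ) ⊗ₖ B) *ᵥ z) ≤ opNorm p p B * pnorm p z := by
  rw [pnorm_le_mul_pnorm_iff hp (opNorm_nonneg p p B), Fintype.sum_prod_type,
    Fintype.sum_prod_type, mul_sum]
  refine sum_le_sum fun i _ => ?_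
  simp only [one_kronecker_mulVec_apply]
  exact (pnorm_le_mul_pnorm_iff hp (opNorm_nonneg p p B) _ _).mp (pnorm_mulVec_le_opNorm hp B _)

lemma pnorm_kronecker_mulVec_le (hp : 0 < p) (A : Matrix ι ι' ℝ) (B : Matrix κ κ' ℝ)
    (z : ι' × κ' → ℝ) :
    pnorm p ((A ⊗ₖ B) *ᵥ z) ≤ opNorm p p A * opNorm p p B * pnorm p z := by
  classical
  have hfactor : A ⊗ₖ B = (A ⊗ₖ (1 : Matrix κ κ ℝ)) * ((1 : Matrix ι' ι' ℝ) ⊗ₖ B) := by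
    rw [← mul_kronecker_mul, Matrix.mul_one, Matrix.one_mul]
  calc pnorm p ((A ⊗ₖ B) *ᵥ z)
      = pnorm p ((A ⊗ₖ (1 : Matrix κ κ ℝ)) *ᵥ (((1 : Matrix ι' ι' ℝ) ⊗ₖ B) *ᵥ z)) := by
        rw [hfactor, mulVec_mulVec]
    _ ≤ opNorm p p A * pnorm p (((1 : Matrix ι' ι' ℝ) ⊗ₖ B) *ᵥ z) :=
        pnorm_kronecker_one_mulVec_le hp A _
    _ ≤ opNorm p p A * (opNorm p p B * pnorm p z) :=
        mul_le_mul_of_nonneg_left (pnorm_one_kronecker_mulVec_le hp B z) (opNorm_nonneg p p A)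
    _ = opNorm p p A * opNorm p p B * pnorm p z := (mul_assoc _ _ _).symm

lemma opNorm_mul_opNorm_le_opNorm_kronecker (hp : 0 < p) (A : Matrix ι ι' ℝ)
    (B : Matrix κ κ' ℝ) : opNorm p p A * opNorm p p B ≤ opNorm p p (A ⊗ₖ B) := by
  refine Real.sSup_mul_sSup_le (opNorm_set_nonneg p p A) (opNorm_set_nonneg p p B)
    (opNorm_nonneg p p _) ?_
  rintro _ ⟨x, hx, rfl⟩ _ ⟨y, hy, rfl⟩
  rw [div_mul_div_comm, ← pnorm_outer, ← pnorm_outer, ← kronecker_mulVec_outer]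
  exact div_pnorm_le_opNorm hp _ (outer_ne_zero hx hy)

theorem opNorm_kronecker (hp : 0 < p) (A : Matrix ι ι' ℝ) (B : Matrix κ κ' ℝ) :
    opNorm p p (A ⊗ₖ B) = opNorm p p A * opNorm p p B :=
  le_antisymm
    (opNorm_le_of_forall_pnorm_le hp (mul_nonneg (opNorm_nonneg p p A) (opNorm_nonneg p p B))
      (pnorm_kronecker_mulVec_le hp A B))
    (opNorm_mul_opNorm_le_opNorm_kronecker hp A B)

end Kronecker

/-- the `p ↦ p` operator norm is multiplicative under the Kronecker
product: `‖M ⊗ N‖_{p→p} = ‖M‖_{p→p} · ‖N‖_{p→p}`. -/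
theorem stmt16 (m n : ℕ) (p : ℝ) (hp : 1 ≤ p)
    (M : Matrix (Fin m) (Fin m) ℝ) (N : Matrix (Fin n) (Fin n) ℝ) :
    opNorm p p (M ⊗ₖ N) = opNorm p p M * opNorm p p N :=
  opNorm_kronecker (zero_lt_one.trans_le hp) M N
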